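/- Let λ_n be the largest eigenvalue of the n × n symmetric matrix A_n with diagonal entries 2cos(2πk/n), k = 0,...,n-1, ones on the first super- and sub-diagonals, and ones in the corners (1,n) and (n,1). Then for all sufficiently large n, 4 - 40/n < λ_n. -/

import Mathlib

/-- The n × n matrix of the operator x + x⁻¹ + y + y⁻¹ in the representation T_q of
the finite Heisenberg group: diagonal entries 2cos(2πqk/n), ones on the first super-
and sub-diagonals and in the corners (periodic tridiagonal). -/
noncomputable def heisMatrix (n q : ℕ) : Matrix (Fin n) (Fin n) ℝ :=
  Matrix.of fun i j : Fin n =>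
    if i = j then 2 * Real.cos (2 * Real.pi * q * (i : ℕ) / n)
    else if ((i : ℕ) + 1) % n = (j : ℕ) ∨ ((j : ℕ) + 1) % n = (i : ℕ) then 1
    else 0

/-!
A Rayleigh-quotient estimate with a tent-shaped test vector. With `S` the cyclic shift, the
matrix is `diag (2 cos (2πk/n)) + S + S⁻¹`, whose quadratic form is
`∑ₖ (2 cos (2πk/n) + 2) vₖ² - ∑ₖ (vₖ₊₁ - vₖ)²`. For the tent `vₖ = (m - dist(k, 0))₊` on the cycle,
every cosine on the support is at least `1 - (2πm/n)²/2`, the energy `∑ (vₖ₊₁ - vₖ)²` is at most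
`4m` and `‖v‖² ≥ 2m³/3`, so the top eigenvalue is at least `4 - (2πm/n)² - 6/m²`. The choice
`m ≈ √(n/3)` makes both error terms `O(1/n)`, with sum below `40/n`.
-/

open Matrix Finset

theorem Nat.add_one_mod_eq_ite {i n : ℕ} (h : i < n) :
    (i + 1) % n = if i + 1 = n then 0 else i + 1 := by
  split_ifs with hi
  · rw [hi, Nat.mod_self]
  · exact Nat.mod_eq_of_lt (by omega)

theorem Fin.val_add_one_eq_ite {n : ℕ} [NeZero n] (i : Fin n) :
    ((i + 1 : Fin n) : ℕ) = if (i : ℕ) + 1 = n then 0 else (i : ℕ) + 1 := by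
  rw [Fin.val_add, Fin.val_one', Nat.add_mod_mod, Nat.add_one_mod_eq_ite i.isLt]

open scoped MatrixOrder in
theorem Matrix.IsHermitian.dotProduct_mulVec_le_sSup_spectrum_mul {ι : Type*} [Fintype ι]
    [DecidableEq ι] {A : Matrix ι ι ℝ} (hA : A.IsHermitian) (v : ι → ℝ) :
    v ⬝ᵥ (A *ᵥ v) ≤ sSup (spectrum ℝ A) * (v ⬝ᵥ v) := by
  have hle : A ≤ algebraMap ℝ _ (sSup (spectrum ℝ A)) :=
    le_algebraMap_of_spectrum_le (fun x hx => le_csSup finite_real_spectrum.bddAbove hx)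
      hA.isSelfAdjoint
  simpa [sub_mulVec, Algebra.algebraMap_eq_smul_one, smul_mulVec, dotProduct_smul] using
    (Matrix.le_iff.mp hle).dotProduct_mulVec_nonneg v

theorem heisMatrix_isHermitian (n q : ℕ) : (heisMatrix n q).IsHermitian := by
  ext i j
  simp only [conjTranspose_apply, heisMatrix, of_apply, star_trivial]
  by_cases hij : i = j
  · subst hij; rfl
  · rw [if_neg (Ne.symm hij), if_neg hij]
    exact if_congr or_comm rfl rfl

theorem heisMatrix_apply {n : ℕ} [NeZero n] (hn : 3 ≤ n) (q : ℕ) (i j : Fin n) :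
    heisMatrix n q i j = (if i = j then 2 * Real.cos (2 * Real.pi * q * (i : ℕ) / n) else 0)
      + (if i + 1 = j then 1 else 0) + (if i - 1 = j then 1 else 0) := by
  have := i.isLt; have := j.isLt
  simp only [heisMatrix, of_apply, sub_eq_iff_eq_add, Fin.ext_iff, Fin.val_add_one_eq_ite,
    Nat.add_one_mod_eq_ite i.isLt, Nat.add_one_mod_eq_ite j.isLt]
  split_ifs <;> first | (exfalso; omega) | ring

theorem heisMatrix_mulVec_apply {n : ℕ} [NeZero n] (hn : 3 ≤ n) (q : ℕ) (v : Fin n → ℝ)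
    (i : Fin n) : (heisMatrix n q *ᵥ v) i =
      2 * Real.cos (2 * Real.pi * q * (i : ℕ) / n) * v i + v (i + 1) + v (i - 1) := by
  simp only [mulVec, dotProduct, heisMatrix_apply hn, add_mul, ite_mul, zero_mul, one_mul,
    sum_add_distrib, sum_ite_eq, mem_univ, if_true]

theorem heisMatrix_dotProduct_mulVec {n : ℕ} [NeZero n] (hn : 3 ≤ n) (q : ℕ) (v : Fin n → ℝ) :
    v ⬝ᵥ (heisMatrix n q *ᵥ v) =
      ∑ i : Fin n, (2 * Real.cos (2 * Real.pi * q * (i : ℕ) / n) + 2) * v i ^ 2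
        - ∑ i, (v (i + 1) - v i) ^ 2 := by
  have hprev : ∑ i, v i * v (i - 1) = ∑ i, v (i + 1) * v i := by
    simpa using (Equiv.sum_comp (Equiv.addRight (1 : Fin n)) fun i => v i * v (i - 1)).symm
  have hsq : ∑ i, v (i + 1) ^ 2 = ∑ i, v i ^ 2 :=
    Equiv.sum_comp (Equiv.addRight (1 : Fin n)) fun i => v i ^ 2
  rw [← sub_eq_zero, dotProduct, ← sum_sub_distrib, ← sum_sub_distrib]
  calc _ = ∑ i, ((v i * v (i - 1) - v (i + 1) * v i) + (v (i + 1) ^ 2 - v i ^ 2)) := by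
          refine sum_congr rfl fun i _ => ?_
          rw [heisMatrix_mulVec_apply hn]
          ring
    _ = 0 := by rw [sum_add_distrib, sum_sub_distrib, sum_sub_distrib, hprev, hsq]; ring

def cycleDist {n : ℕ} (i : Fin n) : ℕ := min (i : ℕ) (n - i)

/-- Truncated subtraction on `ℕ` makes this the tent `(m - cycleDist i)₊` of height `m` at `0`. -/
noncomputable def tent {n : ℕ} (m : ℕ) (i : Fin n) : ℝ := ((m - cycleDist i : ℕ) : ℝ)

section Tent

variable {n : ℕ}

theorem cycleDist_add_one_le_and_le_add_one [NeZero n] (i : Fin n) :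
    cycleDist (i + 1) ≤ cycleDist i + 1 ∧ cycleDist i ≤ cycleDist (i + 1) + 1 := by
  have := i.isLt
  simp only [cycleDist, Fin.val_add_one_eq_ite]
  split_ifs <;> omega

theorem sq_tent_add_one_sub_le [NeZero n] (m : ℕ) (i : Fin n) :
    (tent m (i + 1) - tent m i) ^ 2 ≤
      (if cycleDist i < m then 1 else 0) + (if cycleDist (i + 1) < m then 1 else 0) := by
  obtain ⟨h₁, h₂⟩ := cycleDist_add_one_le_and_le_add_one i
  have hup : tent m (i + 1) ≤ tent m i + 1 := by
    unfold tent; exact_mod_cast (by omega : m - cycleDist (i + 1) ≤ m - cycleDist i + 1)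
  have hdown : tent m i ≤ tent m (i + 1) + 1 := by
    unfold tent; exact_mod_cast (by omega : m - cycleDist i ≤ m - cycleDist (i + 1) + 1)
  split_ifs with ha hb hb
  all_goals first
    | nlinarith
    | simp [tent, Nat.sub_eq_zero_of_le (not_lt.1 ha), Nat.sub_eq_zero_of_le (not_lt.1 hb)]

theorem card_cycleDist_lt_le (m : ℕ) : #{i : Fin n | cycleDist i < m} ≤ 2 * m := by
  calc #{i : Fin n | cycleDist i < m}
      ≤ #{i : Fin n | (i : ℕ) < m} + #{i : Fin n | n - (i : ℕ) < m} := by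
        refine (card_le_card fun i => ?_).trans (card_union_le _ _)
        simp only [mem_filter_univ, mem_union]
        unfold cycleDist
        omega
    _ ≤ m + m := by
        gcongr
        · exact Fin.card_filter_val_lt.trans_le (min_le_right _ _)
        · refine (card_le_card_of_injOn (s := {i : Fin n | n - (i : ℕ) < m}) (t := range m)
            (fun i => n - (i : ℕ)) (fun i hi => by simpa using hi) fun i _ j _ h => ?_).trans
            (card_range m).le
          have := i.isLt; have := j.isLt
          exact Fin.ext (by simp only at h; omega)
    _ = 2 * m := by ring

theorem sum_sq_tent_add_one_sub_le [NeZero n] (m : ℕ) :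
    ∑ i : Fin n, (tent m (i + 1) - tent m i) ^ 2 ≤ 4 * m := by
  have hshift : ∑ i : Fin n, (if cycleDist (i + 1) < m then (1 : ℝ) else 0)
      = ∑ i : Fin n, (if cycleDist i < m then 1 else 0) :=
    Equiv.sum_comp (Equiv.addRight (1 : Fin n)) fun i => if cycleDist i < m then (1 : ℝ) else 0
  calc ∑ i : Fin n, (tent m (i + 1) - tent m i) ^ 2
      ≤ ∑ i : Fin n,
          ((if cycleDist i < m then 1 else 0) + (if cycleDist (i + 1) < m then 1 else 0)) :=
        sum_le_sum fun i _ => sq_tent_add_one_sub_le m i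
    _ = 2 * #{i : Fin n | cycleDist i < m} := by
        rw [sum_add_distrib, hshift, sum_boole]; ring
    _ ≤ 2 * (2 * m : ℕ) := by gcongr; exact_mod_cast card_cycleDist_lt_le m
    _ = 4 * m := by push_cast; ring

theorem two_mul_cube_div_three_le_sum_range (m : ℕ) :
    2 * (m : ℝ) ^ 3 / 3 ≤ ∑ k ∈ range m, (((k : ℝ) + 1) ^ 2 + (k : ℝ) ^ 2) := by
  induction m with
  | zero => simp
  | succ m ih =>
    rw [sum_range_succ]
    push_cast
    nlinarith

theorem two_mul_cube_div_three_le_sum_sq_tent {m : ℕ} (h : 2 * m ≤ n) :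
    2 * (m : ℝ) ^ 3 / 3 ≤ ∑ i : Fin n, tent m i ^ 2 := by
  set f : ℕ → ℝ := fun k => ((m - min k (n - k) : ℕ) : ℝ) ^ 2
  have hdisj : Disjoint (range m) (Ico (n - m) n) :=
    disjoint_left.2 fun k hk hk' => by simp only [mem_range, mem_Ico] at hk hk'; omega
  have hsub : range m ∪ Ico (n - m) n ⊆ range n := by
    intro k hk; simp only [mem_union, mem_range, mem_Ico] at hk ⊢; omega
  have hleft : ∑ k ∈ range m, f k = ∑ k ∈ range m, ((k : ℝ) + 1) ^ 2 := by
    rw [← sum_range_reflect]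
    refine sum_congr rfl fun k hk => ?_
    rw [mem_range] at hk
    simp only [f]
    rw [show m - min (m - 1 - k) (n - (m - 1 - k)) = k + 1 by omega]
    push_cast; ring
  have hright : ∑ k ∈ Ico (n - m) n, f k = ∑ k ∈ range m, (k : ℝ) ^ 2 := by
    rw [sum_Ico_eq_sum_range, Nat.sub_sub_self (by omega)]
    refine sum_congr rfl fun k hk => ?_
    rw [mem_range] at hk
    simp only [f]
    rw [show m - min (n - m + k) (n - (n - m + k)) = k by omega]
  calc 2 * (m : ℝ) ^ 3 / 3 ≤ ∑ k ∈ range m, (((k : ℝ) + 1) ^ 2 + (k : ℝ) ^ 2) :=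
        two_mul_cube_div_three_le_sum_range m
    _ = ∑ k ∈ range m ∪ Ico (n - m) n, f k := by
        rw [sum_union hdisj, hleft, hright, sum_add_distrib]
    _ ≤ ∑ k ∈ range n, f k := sum_le_sum_of_subset_of_nonneg hsub fun _ _ _ => sq_nonneg _
    _ = ∑ i : Fin n, tent m i ^ 2 := (Fin.sum_univ_eq_sum_range f n).symm

theorem one_sub_sq_div_two_le_cos_of_cycleDist (i : Fin n) :
    1 - (2 * Real.pi * cycleDist i / n) ^ 2 / 2 ≤ Real.cos (2 * Real.pi * (i : ℕ) / n) := by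
  rcases le_total (i : ℕ) (n - i) with h | h
  · rw [cycleDist, min_eq_left h]
    exact Real.one_sub_sq_div_two_le_cos
  · have hn : (n : ℝ) ≠ 0 := by have := i.pos; positivity
    have hcos : Real.cos (2 * Real.pi * (i : ℕ) / n)
        = Real.cos (2 * Real.pi * (n - i : ℕ) / n) := by
      rw [Nat.cast_sub i.isLt.le, ← Real.cos_two_pi_sub]
      congr 1
      field_simp
    rw [cycleDist, min_eq_right h, hcos]
    exact Real.one_sub_sq_div_two_le_cos

theorem four_sub_sq_mul_tent_sq_le (m : ℕ) (i : Fin n) :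
    (4 - (2 * Real.pi * m / n) ^ 2) * tent m i ^ 2
      ≤ (2 * Real.cos (2 * Real.pi * (i : ℕ) / n) + 2) * tent m i ^ 2 := by
  rcases le_or_gt m (cycleDist i) with h | h
  · simp [tent, Nat.sub_eq_zero_of_le h]
  · gcongr
    have hdist : (2 * Real.pi * cycleDist i / n) ^ 2 ≤ (2 * Real.pi * m / n) ^ 2 := by
      gcongr
    linarith [one_sub_sq_div_two_le_cos_of_cycleDist i]

end Tent

theorem four_sub_sub_le_sSup_spectrum_heisMatrix {n m : ℕ} (hn : 3 ≤ n) (hm : 1 ≤ m)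
    (hmn : 2 * m ≤ n) :
    4 - (2 * Real.pi * m / n) ^ 2 - 6 / (m : ℝ) ^ 2 ≤ sSup (spectrum ℝ (heisMatrix n 1)) := by
  have : NeZero n := ⟨by omega⟩
  set v : Fin n → ℝ := tent m
  set S := ∑ i, v i ^ 2
  have hmass : 2 * (m : ℝ) ^ 3 / 3 ≤ S := two_mul_cube_div_three_le_sum_sq_tent hmn
  have hm0 : (0 : ℝ) < m := by exact_mod_cast hm
  have hS : 0 < S := lt_of_lt_of_le (by positivity) hmass
  have henergy : ∑ i, (v (i + 1) - v i) ^ 2 ≤ 6 / (m : ℝ) ^ 2 * S :=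
    calc ∑ i, (v (i + 1) - v i) ^ 2 ≤ 4 * m := sum_sq_tent_add_one_sub_le m
      _ = 6 / (m : ℝ) ^ 2 * (2 * (m : ℝ) ^ 3 / 3) := by field_simp; ring
      _ ≤ 6 / (m : ℝ) ^ 2 * S := by gcongr
  have hdiag : (4 - (2 * Real.pi * m / n) ^ 2) * S
      ≤ ∑ i : Fin n, (2 * Real.cos (2 * Real.pi * (i : ℕ) / n) + 2) * v i ^ 2 := by
    rw [mul_sum]
    exact sum_le_sum fun i _ => four_sub_sq_mul_tent_sq_le m i
  have hquad := heisMatrix_dotProduct_mulVec hn 1 v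
  have hrayleigh := (heisMatrix_isHermitian n 1).dotProduct_mulVec_le_sSup_spectrum_mul v
  simp only [Nat.cast_one, mul_one] at hquad
  have hvv : v ⬝ᵥ v = S := by simp only [dotProduct, S, sq]
  rw [hvv] at hrayleigh
  refine le_of_mul_le_mul_right ?_ hS
  calc (4 - (2 * Real.pi * m / n) ^ 2 - 6 / (m : ℝ) ^ 2) * S
      = (4 - (2 * Real.pi * m / n) ^ 2) * S - 6 / (m : ℝ) ^ 2 * S := by ring
    _ ≤ ∑ i : Fin n, (2 * Real.cos (2 * Real.pi * (i : ℕ) / n) + 2) * v i ^ 2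
          - ∑ i, (v (i + 1) - v i) ^ 2 := sub_le_sub hdiag henergy
    _ = v ⬝ᵥ (heisMatrix n 1 *ᵥ v) := hquad.symm
    _ ≤ sSup (spectrum ℝ (heisMatrix n 1)) * S := hrayleigh

theorem sq_two_pi_mul_div_add_six_div_sq_lt {m n : ℝ} (hm : 0 < m) (hlo : 3 * m ^ 2 ≤ n)
    (hhi : n ≤ 4 * m ^ 2) : (2 * Real.pi * m / n) ^ 2 + 6 / m ^ 2 < 40 / n := by
  have hn : 0 < n := lt_of_lt_of_le (by positivity) hlo
  have hpi : Real.pi ^ 2 < 10 := by nlinarith [Real.pi_lt_d2, Real.pi_pos]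
  have hcos : (2 * Real.pi * m / n) ^ 2 ≤ 14 / n := by
    have : (2 * Real.pi * m) ^ 2 ≤ 14 * n := by nlinarith
    rw [div_pow, div_le_div_iff₀ (by positivity) hn]
    nlinarith
  have henergy : 6 / m ^ 2 ≤ 24 / n := by
    rw [div_le_div_iff₀ (by positivity) hn]
    linarith
  have h38 : 14 / n + 24 / n < 40 / n := by
    rw [← add_div]
    exact div_lt_div_of_pos_right (by norm_num) hn
  linarith

theorem heisMatrix_top_eigenvalue_lower_bound :
    ∃ N : ℕ, ∀ n : ℕ, N ≤ n →
      4 - 40 / (n : ℝ) < sSup (spectrum ℝ (heisMatrix n 1)) := by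
  refine ⟨147, fun n hn => ?_⟩
  have hsq := Nat.sqrt_le' (n / 3)
  have hsucc : n / 3 < (Nat.sqrt (n / 3) + 1) ^ 2 := Nat.lt_succ_sqrt' (n / 3)
  have hm : 7 ≤ Nat.sqrt (n / 3) := Nat.le_sqrt.2 (by omega)
  generalize Nat.sqrt (n / 3) = m at hsq hsucc hm
  have hlo : 3 * m ^ 2 ≤ n := by omega
  have hhi : n ≤ 4 * m ^ 2 := by
    have : n < 3 * (m + 1) ^ 2 := by omega
    nlinarith
  have hspec := four_sub_sub_le_sSup_spectrum_heisMatrix (n := n) (m := m) (by omega) (by omega)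
    (by nlinarith)
  have hnum := sq_two_pi_mul_div_add_six_div_sq_lt (m := m) (n := n) (by positivity)
    (by exact_mod_cast hlo) (by exact_mod_cast hhi)
  linarith
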